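/- The greedy deletion algorithm computes a CXp: for non-constant κ, starting from S = F and, iterating over features i ∈ F in order, removing i from S whenever S \ {i} remains a weak CXp, the resulting set is a subset-minimal weak CXp for (v, c). -/

import Mathlib

open Classical in
def WeakCXp {m : ℕ} (κ : (Fin m → Bool) → Bool) (v : Fin m → Bool) (c : Bool)
    (Y : Finset (Fin m)) : Prop :=
  ∃ x : Fin m → Bool, (∀ j ∉ Y, x j = v j) ∧ κ x ≠ c

open Classical in
/-- One step of the greedy deletion algorithm: drop feature `i` from `S`
iff `S \ {i}` remains a weak CXp. -/
noncomputable def cxpStep {m : ℕ} (κ : (Fin m → Bool) → Bool) (v : Fin m → Bool)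
    (c : Bool) (S : Finset (Fin m)) (i : Fin m) : Finset (Fin m) :=
  if WeakCXp κ v c (S.erase i) then S.erase i else S

lemma weakCXp_mono {m : ℕ} (κ : (Fin m → Bool) → Bool) (v : Fin m → Bool) (c : Bool)
    {Y Y' : Finset (Fin m)} (h : Y ⊆ Y') (hw : WeakCXp κ v c Y) : WeakCXp κ v c Y' := by
  obtain ⟨x, h1, h2⟩ := hw
  exact ⟨x, fun j hj => h1 j (fun hy => hj (h hy)), h2⟩

lemma cxpStep_subset {m : ℕ} (κ : (Fin m → Bool) → Bool) (v : Fin m → Bool) (c : Bool)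
    (S : Finset (Fin m)) (i : Fin m) : cxpStep κ v c S i ⊆ S := by
  unfold cxpStep
  split
  · exact Finset.erase_subset _ _
  · exact Finset.Subset.refl _

lemma foldl_cxpStep_subset {m : ℕ} (κ : (Fin m → Bool) → Bool) (v : Fin m → Bool) (c : Bool)
    (l : List (Fin m)) (S : Finset (Fin m)) : l.foldl (cxpStep κ v c) S ⊆ S := by
  induction l generalizing S with
  | nil => exact Finset.Subset.refl _
  | cons a t ih =>
      exact (ih (cxpStep κ v c S a)).trans (cxpStep_subset κ v c S a)

lemma cxpStep_weak {m : ℕ} (κ : (Fin m → Bool) → Bool) (v : Fin m → Bool) (c : Bool)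
    (S : Finset (Fin m)) (i : Fin m) (h : WeakCXp κ v c S) :
    WeakCXp κ v c (cxpStep κ v c S i) := by
  unfold cxpStep
  split <;> assumption

lemma foldl_cxpStep_weak {m : ℕ} (κ : (Fin m → Bool) → Bool) (v : Fin m → Bool) (c : Bool)
    (l : List (Fin m)) (S : Finset (Fin m)) (h : WeakCXp κ v c S) :
    WeakCXp κ v c (l.foldl (cxpStep κ v c) S) := by
  induction l generalizing S with
  | nil => exact h
  | cons a t ih => exact ih _ (cxpStep_weak κ v c S a h)

lemma foldl_cxpStep_key {m : ℕ} (κ : (Fin m → Bool) → Bool) (v : Fin m → Bool) (c : Bool)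
    (l : List (Fin m)) : ∀ (S : Finset (Fin m)) (i : Fin m), i ∈ l →
    i ∈ l.foldl (cxpStep κ v c) S →
    ¬ WeakCXp κ v c ((l.foldl (cxpStep κ v c) S).erase i) := by
  induction l with
  | nil => intro S i h; exact absurd h List.not_mem_nil
  | cons a t ih =>
      intro S i hmem hifin
      simp only [List.foldl_cons] at hifin ⊢
      rcases List.mem_cons.mp hmem with rfl | hit
      · -- i = a
        have hsub : t.foldl (cxpStep κ v c) (cxpStep κ v c S i) ⊆ cxpStep κ v c S i :=
          foldl_cxpStep_subset κ v c t _
        have hia : i ∈ cxpStep κ v c S i := hsub hifin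
        have hnot : ¬ WeakCXp κ v c (S.erase i) := by
          intro hw
          have : cxpStep κ v c S i = S.erase i := by unfold cxpStep; simp [hw]
          rw [this] at hia
          exact (Finset.notMem_erase i S) hia
        intro hw
        apply hnot
        refine weakCXp_mono κ v c ?_ hw
        refine Finset.erase_subset_erase i (hsub.trans ?_)
        have : cxpStep κ v c S i = S := by unfold cxpStep; simp [hnot]
        rw [this]
      · exact ih (cxpStep κ v c S a) i hit hifin

theorem greedy_deletion_computes_cxp {m : ℕ} (κ : (Fin m → Bool) → Bool)
    (hnc : ∃ v₁ v₂ : Fin m → Bool, κ v₁ ≠ κ v₂)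
    (v : Fin m → Bool) (c : Bool) (hv : κ v = c)
    (l : List (Fin m)) (hnd : l.Nodup) (hall : ∀ i : Fin m, i ∈ l) :
    WeakCXp κ v c (l.foldl (cxpStep κ v c) Finset.univ) ∧
      ∀ Y ⊂ l.foldl (cxpStep κ v c) Finset.univ, ¬ WeakCXp κ v c Y := by
  have huniv : WeakCXp κ v c (Finset.univ : Finset (Fin m)) := by
    obtain ⟨v₁, v₂, hne⟩ := hnc
    by_cases h1 : κ v₁ = c
    · exact ⟨v₂, fun j hj => absurd (Finset.mem_univ j) hj, fun h => hne (h1.trans h.symm)⟩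
    · exact ⟨v₁, fun j hj => absurd (Finset.mem_univ j) hj, h1⟩
  constructor
  · exact foldl_cxpStep_weak κ v c l _ huniv
  · intro Y hY hw
    obtain ⟨i, hiS, hiY⟩ := Finset.exists_of_ssubset hY
    have hYsub : Y ⊆ (l.foldl (cxpStep κ v c) Finset.univ).erase i := fun j hj =>
      Finset.mem_erase.mpr ⟨fun he => hiY (he ▸ hj), hY.subset hj⟩
    exact foldl_cxpStep_key κ v c l Finset.univ i (hall i) hiS
      (weakCXp_mono κ v c hYsub hw)
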